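/- arXiv:0910.5791 — 5 statements merged into one kernel-verified Lean document; each statement's English description precedes it below -/
import Mathlib

section
/- Define f(x) = T(x)^{-1} Λ x for x ∈ R^n with nonzero first component, where Λ = diag(0,1,...,n−1). If f(x_1) = f(x_2), then x_1 = α x_2 for some nonzero real α. -/
open Matrix Finset

/-- Lower triangular Toeplitz matrix generated by a vector. -/
def LTT {n : ℕ} (x : Fin n → ℝ) : Matrix (Fin n) (Fin n) ℝ :=
  Matrix.of fun i j =>
    if h : (j : ℕ) ≤ (i : ℕ) then
      x ⟨(i : ℕ) - (j : ℕ), Nat.lt_of_le_of_lt (Nat.sub_le _ _) i.isLt⟩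
    else 0

/-- The diagonal matrix diag(0,1,...,n-1). -/
def Lam (n : ℕ) : Matrix (Fin n) (Fin n) ℝ :=
  Matrix.diagonal fun i => (i : ℝ)

/-!
Put `y = f x₁ = f x₂`. Row 0 of `T(x₁) y = Λ x₁` gives `x₁₀ y₀ = 0`, so `y₀ = 0`. The relation
`T(x) y = Λ x` is linear in `x`, hence also holds for `z = x₂₀ x₁ - x₁₀ x₂`, which has `z₀ = 0`.
Row `i` of it reads `i zᵢ = ∑_{j ≤ i} z_{i-j} yⱼ`; since `y₀ = 0` the right side only involves
`z_k` with `k < i`, so by induction `z = 0`.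
-/

section LTT

variable {n : ℕ}

theorem LTT_sub (x x' : Fin n → ℝ) : LTT (x - x') = LTT x - LTT x' := by
  ext i j
  simp only [LTT, of_apply, Matrix.sub_apply, Pi.sub_apply]
  split_ifs <;> simp

theorem LTT_smul (a : ℝ) (x : Fin n → ℝ) : LTT (a • x) = a • LTT x := by
  ext i j
  simp only [LTT, of_apply, Matrix.smul_apply, Pi.smul_apply]
  split_ifs <;> simp

theorem LTT_blockTriangular (x : Fin n → ℝ) : (LTT x).BlockTriangular OrderDual.toDual :=
  fun _ _ hij => dif_neg (Nat.not_le.mpr hij)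

theorem LTT_apply_self (x : Fin (n + 1) → ℝ) (i : Fin (n + 1)) : LTT x i i = x 0 := by
  simp [LTT]

theorem det_LTT (x : Fin (n + 1) → ℝ) : (LTT x).det = x 0 ^ (n + 1) := by
  simp [det_of_isLowerTriangular _ (LTT_blockTriangular x), LTT_apply_self]

theorem LTT_mulVec_inv_mulVec {x : Fin (n + 1) → ℝ} (hx : x 0 ≠ 0) (v : Fin (n + 1) → ℝ) :
    LTT x *ᵥ ((LTT x)⁻¹ *ᵥ v) = v := by
  have hdet : IsUnit (LTT x).det := by
    rw [det_LTT]; exact (pow_ne_zero _ hx).isUnit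
  rw [mulVec_mulVec, mul_nonsing_inv _ hdet, one_mulVec]

theorem LTT_mulVec_apply_zero (x v : Fin (n + 1) → ℝ) : (LTT x *ᵥ v) 0 = x 0 * v 0 := by
  rw [mulVec, dotProduct, Finset.sum_eq_single 0 (fun j _ hj => ?_) (by simp)]
  · rw [LTT_apply_self]
  · simp [LTT, hj]

theorem Lam_mulVec_apply (v : Fin n → ℝ) (i : Fin n) : (Lam n *ᵥ v) i = i * v i := by
  simp [Lam, mulVec_diagonal]

theorem eq_zero_of_LTT_mulVec_eq_Lam_mulVec {y z : Fin (n + 1) → ℝ} (hy : y 0 = 0)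
    (hz : z 0 = 0) (h : LTT z *ᵥ y = Lam (n + 1) *ᵥ z) : z = 0 := by
  suffices ∀ i, z i = 0 from funext this
  intro i
  induction i using WellFoundedLT.induction with
  | _ i ih =>
  obtain rfl | hi := eq_or_ne i 0
  · exact hz
  -- row `i` reads `i * z i = ∑_{j ≤ i} z (i - j) * y j`, and every term vanishes
  have hrow : (i : ℝ) * z i = 0 := by
    rw [← Lam_mulVec_apply, ← h, mulVec, dotProduct]
    refine Finset.sum_eq_zero fun j _ => ?_
    obtain rfl | hj := eq_or_ne j 0
    · rw [hy, mul_zero]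
    have hj : 0 < (j : ℕ) := Fin.pos_iff_ne_zero.mpr hj
    simp only [LTT, of_apply]
    split_ifs with hji
    · rw [ih _ (Fin.lt_def.mpr (show (i : ℕ) - j < i by omega)), zero_mul]
    · rw [zero_mul]
  have hi : (i : ℝ) ≠ 0 := by exact_mod_cast Fin.val_ne_zero_iff.mpr hi
  exact (mul_eq_zero.mp hrow).resolve_left hi

end LTT

theorem f_injective_up_to_scaling {n : ℕ} (x₁ x₂ : Fin (n + 1) → ℝ)
    (h₁ : x₁ 0 ≠ 0) (h₂ : x₂ 0 ≠ 0)
    (hf : (LTT x₁)⁻¹ *ᵥ (Lam (n + 1) *ᵥ x₁) = (LTT x₂)⁻¹ *ᵥ (Lam (n + 1) *ᵥ x₂)) :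
    ∃ α : ℝ, α ≠ 0 ∧ x₁ = α • x₂ := by
  set y := (LTT x₁)⁻¹ *ᵥ (Lam (n + 1) *ᵥ x₁)
  have e₁ : LTT x₁ *ᵥ y = Lam (n + 1) *ᵥ x₁ := LTT_mulVec_inv_mulVec h₁ _
  have e₂ : LTT x₂ *ᵥ y = Lam (n + 1) *ᵥ x₂ := hf ▸ LTT_mulVec_inv_mulVec h₂ _
  have hy : y 0 = 0 := by
    have := congrFun e₁ 0
    rw [LTT_mulVec_apply_zero, Lam_mulVec_apply] at this
    simpa [h₁] using this
  set z := x₂ 0 • x₁ - x₁ 0 • x₂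
  have hz : LTT z *ᵥ y = Lam (n + 1) *ᵥ z := by
    simp only [z, LTT_sub, LTT_smul, sub_mulVec, smul_mulVec, e₁, e₂, mulVec_sub, mulVec_smul]
  have hz0 : z 0 = 0 := by simp [z, mul_comm]
  have hz_eq := eq_zero_of_LTT_mulVec_eq_Lam_mulVec hy hz0 hz
  refine ⟨x₁ 0 / x₂ 0, div_ne_zero h₁ h₂, ?_⟩
  rw [div_eq_inv_mul, mul_smul, ← sub_eq_zero.mp hz_eq, smul_smul, inv_mul_cancel₀ h₂, one_smul]
end

section
/- Let x_1,...,x_n and y_1,...,y_n be real numbers, p(x) = Π(x−x_j) with coefficients c_0,...,c_n and q(x) = Π(x−y_j) with coefficients d_0,...,d_n. Define m_k = Σ_j x_j^k − Σ_j y_j^k for k = 1,...,2n, m̃ = (0, m_1,...,m_{2n})^T, and let ã ∈ R^{2n+1} with first component 1 solve T(m̃)ã = Λã, where Λ = diag(0,...,2n). Let c = (c_n,...,c_0,0,...,0)^T and d = (d_n,...,d_0,0,...,0)^T in R^{2n+1}. Then T(ã)c = d. -/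
open Matrix Finset

/-!
With `P = ∏ (1 - x_j X)` and `Q = ∏ (1 - y_j X)` (the reversed polynomials of `p` and `q`) the power
series `B = Q / P` satisfies `X B' = M B`, where `M = ∑_{k ≥ 1} m_k X^k` is the difference of the
logarithmic derivatives `-X P'/P = ∑_j x_j X / (1 - x_j X)` and `-X Q'/Q`.
Read modulo `X^(2n+1)`, `X A' = M A` is exactly the system `T(m̃) ã = Λ ã`, and since `m_0 = 0` it
determines `A` from `A(0) = 1` recursively; hence `ã` is the truncation of `B`. As `T(u) v` is the
truncated product of the series of `u` and `v`, `T(ã) c` is the truncation of `B P = Q`, i.e. `d`.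
-/

theorem Derivation.map_prod_of_map_eq_mul {R A ι : Type*} [CommSemiring R] [CommSemiring A]
    [Algebra R A] (D : Derivation R A A) (s : Finset ι) {f g : ι → A}
    (h : ∀ j ∈ s, D (f j) = g j * f j) :
    D (∏ j ∈ s, f j) = (∑ j ∈ s, g j) * ∏ j ∈ s, f j := by
  classical
  induction s using Finset.induction_on with
  | empty => simp
  | insert j s hj ih =>
    rw [prod_insert hj, sum_insert hj, Derivation.leibniz, smul_eq_mul, smul_eq_mul,
      h j (mem_insert_self j s), ih fun i hi => h i (mem_insert_of_mem hi)]
    ring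

theorem Derivation.map_eq_sub_mul_of_mul_eq {R A : Type*} [CommSemiring R] [CommRing A]
    [IsDomain A] [Algebra R A] (D : Derivation R A A) {b c d g h : A} (hc : c ≠ 0)
    (hcb : c * b = d) (hDc : D c = g * c) (hDd : D d = h * d) : D b = (h - g) * b := by
  apply mul_left_cancel₀ hc
  have hD := congrArg D hcb
  rw [Derivation.leibniz, smul_eq_mul, smul_eq_mul, hDc, hDd, ← hcb] at hD
  linear_combination hD

namespace Polynomial

variable {R : Type*} [CommRing R] [IsDomain R]

theorem reverse_prod_X_sub_C {ι : Type*} (s : Finset ι) (x : ι → R) :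
    (∏ j ∈ s, (X - C (x j))).reverse = ∏ j ∈ s, (1 - C (x j) * X) := by
  classical
  induction s using Finset.induction_on with
  | empty => simpa using reverse_C (1 : R)
  | insert j s hj ih =>
    rw [prod_insert hj, prod_insert hj, reverse_mul_of_domain, ih, sub_eq_add_neg, ← C_neg,
      reverse_add_C, natDegree_X, pow_one, ← mul_one X, reverse_X_mul, ← C_1, reverse_C, C_neg,
      C_1, mul_one, neg_mul, ← sub_eq_add_neg]

theorem coeff_eq_of_eval_eq [Infinite R] {p : R[X]} {n : ℕ} {cc : ℕ → R}
    (h : ∀ t, p.eval t = ∑ i ∈ range (n + 1), cc i * t ^ i) {i : ℕ} (hi : i ≤ n) :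
    p.coeff i = cc i := by
  have hp : p = ∑ i ∈ range (n + 1), C (cc i) * X ^ i :=
    funext fun t => by simp [h, eval_finsetSum]
  simp [hp, coeff_X_pow, Nat.lt_succ_iff.mpr hi]

end Polynomial

namespace PowerSeries

variable {R : Type*} [CommRing R]

theorem coeff_prod_one_sub_C_mul_X [IsDomain R] [Infinite R] {n : ℕ} (x : Fin n → R)
    (cc : ℕ → R) (hp : ∀ t : R, ∏ j, (t - x j) = ∑ i ∈ range (n + 1), cc i * t ^ i) (k : ℕ) :
    coeff k (∏ j, (1 - C (x j) * X) : R⟦X⟧) = if k ≤ n then cc (n - k) else 0 := by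
  set P : Polynomial R := ∏ j, (Polynomial.X - Polynomial.C (x j))
  have hdeg : P.natDegree = n := by
    simp [P, Polynomial.natDegree_finsetProd_X_sub_C_eq_card]
  have hcoe : (∏ j, (1 - C (x j) * X) : R⟦X⟧) = (P.reverse : R⟦X⟧) := by
    rw [Polynomial.reverse_prod_X_sub_C, ← Polynomial.coeToPowerSeries.ringHom_apply, map_prod]
    simp
  rw [hcoe, Polynomial.coeff_coe, Polynomial.coeff_reverse, hdeg]
  split_ifs with hk
  · rw [Polynomial.revAt_le hk]
    exact Polynomial.coeff_eq_of_eval_eq (by simpa [P, Polynomial.eval_prod] using hp)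
      (Nat.sub_le n k)
  · rw [Polynomial.revAt_eq_self_of_lt (by omega)]
    exact Polynomial.coeff_eq_zero_of_natDegree_lt (by omega)

theorem coeff_X_mul_derivative (f : R⟦X⟧) (k : ℕ) :
    coeff k (X * d⁄dX R f) = k * coeff k f := by
  rcases k with _ | k
  · simp
  · rw [coeff_succ_X_mul, coeff_derivative, mul_comm]
    push_cast
    ring

def powerSumSeries (r : R) : R⟦X⟧ := mk fun k => if k = 0 then 0 else r ^ k

theorem coeff_powerSumSeries (r : R) (k : ℕ) :
    coeff k (powerSumSeries r) = if k = 0 then 0 else r ^ k :=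
  coeff_mk _ _

theorem powerSumSeries_mul_one_sub_C_mul_X (r : R) :
    powerSumSeries r * (1 - C r * X) = C r * X := by
  have hgeom : powerSumSeries r = rescale r (mk 1) - 1 := by
    ext k
    rw [map_sub, coeff_rescale, coeff_powerSumSeries, coeff_mk, coeff_one]
    split_ifs <;> simp_all
  rw [hgeom, sub_mul, one_mul, ← rescale_X, ← map_one (rescale r), ← map_sub, ← map_mul,
    mk_one_mul_one_sub_eq_one, map_one, map_sub, map_one, sub_sub_cancel]

theorem coeff_sum_powerSumSeries {ι : Type*} (s : Finset ι) (x : ι → R) (k : ℕ) :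
    coeff k (∑ j ∈ s, powerSumSeries (x j)) = if k = 0 then 0 else ∑ j ∈ s, x j ^ k := by
  rw [map_sum]
  split_ifs with hk <;> simp [coeff_powerSumSeries, hk]

@[simp]
theorem constantCoeff_prod_one_sub_C_mul_X {ι : Type*} (s : Finset ι) (x : ι → R) :
    constantCoeff (∏ j ∈ s, (1 - C (x j) * X)) = 1 := by
  simp [map_prod]

theorem X_mul_derivative_prod_one_sub_C_mul_X {ι : Type*} (s : Finset ι) (x : ι → R) :
    X * d⁄dX R (∏ j ∈ s, (1 - C (x j) * X)) =
      -(∑ j ∈ s, powerSumSeries (x j)) * ∏ j ∈ s, (1 - C (x j) * X) := by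
  rw [← sum_neg_distrib]
  refine ((X : R⟦X⟧) • d⁄dX R).map_prod_of_map_eq_mul s fun j _ => ?_
  rw [Derivation.smul_apply, smul_eq_mul, neg_mul, powerSumSeries_mul_one_sub_C_mul_X]
  simp [mul_comm]

theorem prod_one_sub_C_mul_X_mul_inv_mul {K ι : Type*} [Field K] (s : Finset ι) (x : ι → K)
    (F : K⟦X⟧) : (∏ j ∈ s, (1 - C (x j) * X)) * ((∏ j ∈ s, (1 - C (x j) * X))⁻¹ * F) = F := by
  rw [← mul_assoc, PowerSeries.mul_inv_cancel _ (by simp), one_mul]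

theorem X_mul_derivative_inv_prod_mul_prod {K ι : Type*} [Field K] (s : Finset ι) (x y : ι → K) :
    X * d⁄dX K ((∏ j ∈ s, (1 - C (x j) * X))⁻¹ * ∏ j ∈ s, (1 - C (y j) * X)) =
      (∑ j ∈ s, powerSumSeries (x j) - ∑ j ∈ s, powerSumSeries (y j)) *
        ((∏ j ∈ s, (1 - C (x j) * X))⁻¹ * ∏ j ∈ s, (1 - C (y j) * X)) := by
  set P := ∏ j ∈ s, (1 - C (x j) * X)
  have hP : P ≠ 0 := ne_zero_of_map (f := constantCoeff) (by simp [P])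
  have hδ (f : K⟦X⟧) : ((X : K⟦X⟧) • d⁄dX K) f = X * d⁄dX K f := by
    rw [Derivation.smul_apply, smul_eq_mul]
  rw [← hδ, (X • d⁄dX K).map_eq_sub_mul_of_mul_eq hP (prod_one_sub_C_mul_X_mul_inv_mul s x _)
    ((hδ P).trans (X_mul_derivative_prod_one_sub_C_mul_X s x))
    ((hδ _).trans (X_mul_derivative_prod_one_sub_C_mul_X s y))]
  ring

theorem trunc_eq_of_X_mul_derivative_eq [IsDomain R] [CharZero R] {N : ℕ} {M A B : R⟦X⟧}
    (hM : constantCoeff M = 0) (h0 : constantCoeff A = constantCoeff B)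
    (hA : trunc N (X * d⁄dX R A) = trunc N (M * A))
    (hB : trunc N (X * d⁄dX R B) = trunc N (M * B)) : trunc N A = trunc N B := by
  ext k
  rw [coeff_trunc, coeff_trunc]
  split_ifs with hk
  · induction k using Nat.strong_induction_on with
    | _ k ih =>
      rcases Nat.eq_zero_or_pos k with rfl | hpos
      · simpa using h0
      have hrec : ∀ F : R⟦X⟧, trunc N (X * d⁄dX R F) = trunc N (M * F) →
          (k : R) * coeff k F = ∑ p ∈ antidiagonal k, coeff p.1 M * coeff p.2 F := by
        intro F hF
        rw [← coeff_X_mul_derivative, ← coeff_mul, ← coeff_coe_trunc_of_lt hk, hF,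
          coeff_coe_trunc_of_lt hk]
      apply mul_left_cancel₀ (Nat.cast_ne_zero.mpr hpos.ne')
      rw [hrec A hA, hrec B hB]
      -- `M` has no constant term, so only coefficients of `A` and `B` below `k` occur
      refine sum_congr rfl fun p hp => ?_
      rcases Nat.eq_zero_or_pos p.1 with hp1 | hp1
      · simp [hp1, hM]
      · have hpk := mem_antidiagonal.mp hp
        rw [ih p.2 (by omega) (by omega)]
  · rfl

end PowerSeries

open PowerSeries

def seriesOfVec {R : Type*} [Semiring R] {N : ℕ} (v : Fin N → R) : R⟦X⟧ :=
  mk fun k => if h : k < N then v ⟨k, h⟩ else 0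

theorem coeff_seriesOfVec {R : Type*} [Semiring R] {N : ℕ} (v : Fin N → R) (i : Fin N) :
    coeff i (seriesOfVec v) = v i := by
  simp [seriesOfVec]

theorem trunc_seriesOfVec_eq {R : Type*} [CommSemiring R] {N : ℕ} {v : Fin N → R} {F : R⟦X⟧}
    (h : ∀ i : Fin N, v i = coeff i F) : trunc N (seriesOfVec v) = trunc N F := by
  ext k
  rw [coeff_trunc, coeff_trunc]
  split_ifs with hk
  · exact (coeff_seriesOfVec v ⟨k, hk⟩).trans (h ⟨k, hk⟩)
  · rfl

theorem LTT_mulVec_apply {N : ℕ} (v u : Fin N → ℝ) (i : Fin N) :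
    (LTT v *ᵥ u) i = coeff i (seriesOfVec v * seriesOfVec u) := by
  have hterm : ∀ j : Fin N, LTT v i j * u j =
      if (j : ℕ) ≤ i then coeff j (seriesOfVec u) * coeff (i - j) (seriesOfVec v) else 0 := by
    intro j
    have hi := i.isLt
    have hj := j.isLt
    simp only [LTT, of_apply, seriesOfVec, coeff_mk]
    split_ifs <;> first | omega | ring
  rw [mulVec, dotProduct, sum_congr rfl fun j _ => hterm j,
    Fin.sum_univ_eq_sum_range (fun k => if k ≤ i then
      coeff k (seriesOfVec u) * coeff (i - k) (seriesOfVec v) else 0), ← sum_filter,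
    mul_comm, coeff_mul, Nat.sum_antidiagonal_eq_sum_range_succ_mk]
  congr 1
  ext k
  simp only [mem_filter, mem_range]
  omega

theorem Lam_mulVec_apply_s13 {N : ℕ} (u : Fin N → ℝ) (i : Fin N) :
    (Lam N *ᵥ u) i = coeff i (X * d⁄dX ℝ (seriesOfVec u)) := by
  rw [Lam, mulVec_diagonal, coeff_X_mul_derivative, coeff_seriesOfVec]

theorem trunc_X_mul_derivative_seriesOfVec {N : ℕ} {m a : Fin N → ℝ} {M : ℝ⟦X⟧}
    (hm : trunc N (seriesOfVec m) = trunc N M) (ha : LTT m *ᵥ a = Lam N *ᵥ a) :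
    trunc N (X * d⁄dX ℝ (seriesOfVec a)) = trunc N (M * seriesOfVec a) := by
  ext k
  rw [coeff_trunc, coeff_trunc]
  split_ifs with hk
  · have hk' := congrFun ha ⟨k, hk⟩
    rw [LTT_mulVec_apply, Lam_mulVec_apply_s13, coeff_mul_eq_coeff_trunc_mul_trunc _ _ hk, hm,
      ← coeff_mul_eq_coeff_trunc_mul_trunc _ _ hk] at hk'
    exact hk'.symm
  · rfl

theorem Ta_c_eq_d {n : ℕ} (x y : Fin n → ℝ) (cc dd : ℕ → ℝ)
    (hp : ∀ t : ℝ, ∏ j, (t - x j) = ∑ i ∈ Finset.range (n + 1), cc i * t ^ i)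
    (hq : ∀ t : ℝ, ∏ j, (t - y j) = ∑ i ∈ Finset.range (n + 1), dd i * t ^ i)
    (mt : Fin (2 * n + 1) → ℝ)
    (hm0 : mt 0 = 0)
    (hmk : ∀ k : Fin (2 * n + 1), (k : ℕ) ≠ 0 →
      mt k = (∑ j, x j ^ (k : ℕ)) - ∑ j, y j ^ (k : ℕ))
    (a : Fin (2 * n + 1) → ℝ) (ha0 : a 0 = 1)
    (ha : LTT mt *ᵥ a = Lam (2 * n + 1) *ᵥ a)
    (c d : Fin (2 * n + 1) → ℝ)
    (hc : ∀ i : Fin (2 * n + 1), c i = if (i : ℕ) ≤ n then cc (n - (i : ℕ)) else 0)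
    (hd : ∀ i : Fin (2 * n + 1), d i = if (i : ℕ) ≤ n then dd (n - (i : ℕ)) else 0) :
    LTT a *ᵥ c = d := by
  set P : ℝ⟦X⟧ := ∏ j, (1 - C (x j) * X)
  set Q : ℝ⟦X⟧ := ∏ j, (1 - C (y j) * X)
  set M : ℝ⟦X⟧ := ∑ j, powerSumSeries (x j) - ∑ j, powerSumSeries (y j)
  have hM : ∀ k : Fin (2 * n + 1), mt k = coeff k M := by
    intro k
    rw [map_sub, coeff_sum_powerSumSeries, coeff_sum_powerSumSeries]
    split_ifs with hk
    · rw [show k = 0 from Fin.ext hk, hm0, sub_zero]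
    · exact hmk k hk
  have hA0 : constantCoeff (seriesOfVec a) = constantCoeff (P⁻¹ * Q) := by
    simp [P, Q, seriesOfVec, ha0]
  have hAB := trunc_eq_of_X_mul_derivative_eq (by simpa [hm0] using (hM 0).symm) hA0
    (trunc_X_mul_derivative_seriesOfVec (trunc_seriesOfVec_eq hM) ha)
    (by rw [X_mul_derivative_inv_prod_mul_prod])
  have hcP : trunc _ (seriesOfVec c) = trunc _ P :=
    trunc_seriesOfVec_eq fun i => (hc i).trans (coeff_prod_one_sub_C_mul_X x cc hp i).symm
  ext i
  rw [LTT_mulVec_apply, coeff_mul_eq_coeff_trunc_mul_trunc _ _ i.isLt, hAB, hcP,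
    ← coeff_mul_eq_coeff_trunc_mul_trunc _ _ i.isLt, mul_comm _ P,
    prod_one_sub_C_mul_X_mul_inv_mul, coeff_prod_one_sub_C_mul_X y dd hq, hd]
end

section
/- Suppose 0 ≤ u_1 < u_2 < ... < u_{2n} are distinct reals, set x_j = u_{2j−1}, y_j = u_{2j}, and m_k = Σ_j x_j^k − Σ_j y_j^k for k = 1,...,2n. Let a ∈ R^{2n} solve A a = m where A is the lower triangular matrix with diagonal entries 1,2,...,2n and subdiagonal band given by −m_1,...,−m_{2n−1} (A_{ij} = j·δ_{ij} − m_{i−j} for i > j). Form the n×n Hankel matrices A_1 = (a_{i+j−1})_{i,j=1}^n and A_2 = (a_{i+j})_{i,j=1}^n. Then each x_j is a generalized eigenvalue of the pencil (A_2, A_1): there exists a nonzero vector v with A_2 v = x_j A_1 v. -/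
open Matrix Finset

private lemma geom_mul (c : ℝ) :
    (1 - PowerSeries.C (R := ℝ) c * PowerSeries.X) * PowerSeries.mk (fun k => c ^ k) = 1 := by
  ext k
  rw [sub_mul, one_mul, map_sub, mul_assoc]
  cases k with
  | zero => simp
  | succ k =>
    rw [PowerSeries.coeff_C_mul, PowerSeries.coeff_succ_X_mul]
    simp [pow_succ, mul_comm]

private lemma deriv_one_sub (c : ℝ) :
    (PowerSeries.derivative ℝ) (1 - PowerSeries.C (R := ℝ) c * PowerSeries.X) = - PowerSeries.C (R := ℝ) c := by
  rw [map_sub]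
  simp [Derivation.leibniz]

private lemma deriv_prod {ι : Type*} [DecidableEq ι] (s : Finset ι) (c : ι → ℝ) :
    (PowerSeries.derivative ℝ) (∏ l ∈ s, (1 - PowerSeries.C (R := ℝ) (c l) * PowerSeries.X)) =
      -(∑ l ∈ s, PowerSeries.C (R := ℝ) (c l) * PowerSeries.mk (fun k => c l ^ k)) *
        ∏ l ∈ s, (1 - PowerSeries.C (R := ℝ) (c l) * PowerSeries.X) := by
  induction s using Finset.induction with
  | empty => simp
  | insert b s' hns ih =>
    rw [Finset.prod_insert hns, Finset.sum_insert hns, Derivation.leibniz, ih,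
      deriv_one_sub]
    have hb : (PowerSeries.C (R := ℝ) (c b) * PowerSeries.mk (fun k => c b ^ k)) *
        (1 - PowerSeries.C (R := ℝ) (c b) * PowerSeries.X) = PowerSeries.C (R := ℝ) (c b) := by
      linear_combination (PowerSeries.C (R := ℝ) (c b)) * geom_mul (c b)
    simp only [smul_eq_mul]
    linear_combination (∏ l ∈ s', (1 - PowerSeries.C (R := ℝ) (c l) * PowerSeries.X)) * hb

private lemma natDegree_prod_one_sub_le' {ι : Type*} (s : Finset ι) (c : ι → ℝ) :
    (∏ l ∈ s, (1 - Polynomial.C (c l) * Polynomial.X)).natDegree ≤ s.card := by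
  refine le_trans (Polynomial.natDegree_prod_le _ _) ?_
  refine le_trans (Finset.sum_le_card_nsmul _ _ 1 ?_) (by simp)
  intro l _
  refine le_trans (Polynomial.natDegree_sub_le _ _) ?_
  simp only [Polynomial.natDegree_one, max_le_iff, Nat.zero_le, true_and]
  exact le_trans (Polynomial.natDegree_mul_le) (by simp)

private lemma natDegree_prod_one_sub_le {n : ℕ} (x : Fin n → ℝ) :
    (∏ l, (1 - Polynomial.C (x l) * Polynomial.X)).natDegree ≤ n :=
  le_trans (natDegree_prod_one_sub_le' _ _) (by simp)

private lemma gseq (n : ℕ) (x y : Fin n → ℝ) :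
    ∃ gc : ℕ → ℝ, gc 0 = 1 ∧
      (∀ k : ℕ, ((k : ℝ) + 1) * gc (k + 1) =
        ∑ p ∈ Finset.range (k + 1),
          ((∑ l, x l ^ (p + 1)) - ∑ l, y l ^ (p + 1)) * gc (k - p)) ∧
      (∀ k : ℕ, 1 ≤ k →
        ∑ s ∈ Finset.range (n + 1),
          (∏ l, (1 - Polynomial.C (x l) * Polynomial.X)).coeff s * gc (k + n - s) = 0) := by
  classical
  set Pp : Polynomial ℝ := ∏ l, (1 - Polynomial.C (x l) * Polynomial.X) with hPp
  set Qp : Polynomial ℝ := ∏ l, (1 - Polynomial.C (y l) * Polynomial.X) with hQp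
  set P : PowerSeries ℝ := (Pp : PowerSeries ℝ) with hP
  set Q : PowerSeries ℝ := (Qp : PowerSeries ℝ) with hQ
  have hPcoe : P = ∏ l, (1 - PowerSeries.C (R := ℝ) (x l) * PowerSeries.X) := by
    rw [hP, hPp, ← Polynomial.coeToPowerSeries.ringHom_apply, map_prod]
    simp
  have hQcoe : Q = ∏ l, (1 - PowerSeries.C (R := ℝ) (y l) * PowerSeries.X) := by
    rw [hQ, hQp, ← Polynomial.coeToPowerSeries.ringHom_apply, map_prod]
    simp
  have hP0 : PowerSeries.constantCoeff (R := ℝ) P = 1 := by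
    rw [hPcoe, map_prod]; simp
  have hQ0 : PowerSeries.constantCoeff (R := ℝ) Q = 1 := by
    rw [hQcoe, map_prod]; simp
  have hPne : P ≠ 0 := fun h => by simp [h] at hP0
  set g : PowerSeries ℝ := Q * P⁻¹ with hg
  have hPg : P * g = Q := by
    rw [hg, mul_comm Q _, ← mul_assoc,
      PowerSeries.mul_inv_cancel P (by rw [hP0]; exact one_ne_zero), one_mul]
  have hg0 : PowerSeries.coeff (R := ℝ) 0 g = 1 := by
    rw [PowerSeries.coeff_zero_eq_constantCoeff_apply, hg, _root_.map_mul, hQ0,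
      PowerSeries.constantCoeff_inv, hP0]
    norm_num
  clear_value g
  refine ⟨fun k => PowerSeries.coeff (R := ℝ) k g, hg0, ?_, ?_⟩
  · -- derivative identity
    intro k
    show ((k : ℝ) + 1) * (PowerSeries.coeff (R := ℝ) (k + 1)) g =
      ∑ p ∈ Finset.range (k + 1),
        ((∑ l, x l ^ (p + 1)) - ∑ l, y l ^ (p + 1)) * (PowerSeries.coeff (R := ℝ) (k - p)) g
    set Ux : PowerSeries ℝ :=
      ∑ l, PowerSeries.C (R := ℝ) (x l) * PowerSeries.mk (fun k => x l ^ k) with hUx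
    set Uy : PowerSeries ℝ :=
      ∑ l, PowerSeries.C (R := ℝ) (y l) * PowerSeries.mk (fun k => y l ^ k) with hUy
    have hdP : (PowerSeries.derivative ℝ) P = -Ux * P := by rw [hPcoe]; exact deriv_prod _ _
    have hdQ : (PowerSeries.derivative ℝ) Q = -Uy * Q := by rw [hQcoe]; exact deriv_prod _ _
    have hD : (PowerSeries.derivative ℝ) g = (Ux - Uy) * g := by
      have h1 := congrArg (PowerSeries.derivative ℝ) hPg
      rw [Derivation.leibniz, hdP, hdQ, ← hPg] at h1
      have h2 : P * ((PowerSeries.derivative ℝ) g) = P * ((Ux - Uy) * g) := by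
        simp only [smul_eq_mul] at h1
        linear_combination h1
      exact mul_left_cancel₀ hPne h2
    have h3 := congrArg (PowerSeries.coeff (R := ℝ) k) hD
    rw [PowerSeries.coeff_derivative] at h3
    rw [mul_comm ((k : ℝ) + 1) _, h3, PowerSeries.coeff_mul,
      Finset.Nat.sum_antidiagonal_eq_sum_range_succ_mk]
    refine Finset.sum_congr rfl ?_
    intro p _
    congr 1
    rw [hUx, hUy, map_sub, map_sum, map_sum]
    simp [pow_succ, mul_comm]
  · intro k hk
    show ∑ s ∈ Finset.range (n + 1), Pp.coeff s * (PowerSeries.coeff (R := ℝ) (k + n - s)) g = 0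
    have hdegQ : Qp.natDegree ≤ n := by
      have := natDegree_prod_one_sub_le y; rwa [← hQp] at this
    have hdegP : Pp.natDegree ≤ n := by
      have := natDegree_prod_one_sub_le x; rwa [← hPp] at this
    have hQd : Qp.coeff (k + n) = 0 :=
      Polynomial.coeff_eq_zero_of_natDegree_lt (by omega)
    have h4 := congrArg (PowerSeries.coeff (R := ℝ) (k + n)) hPg
    rw [PowerSeries.coeff_mul, Finset.Nat.sum_antidiagonal_eq_sum_range_succ_mk,
      hQ, Polynomial.coeff_coe, hQd] at h4
    have h5 : ∀ s ∈ Finset.range ((k + n).succ), s ∉ Finset.range (n + 1) →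
        (PowerSeries.coeff (R := ℝ) s) P * (PowerSeries.coeff (R := ℝ) (k + n - s)) g = 0 := by
      intro s _ hs
      simp only [Finset.mem_range, not_lt] at hs
      rw [hP, Polynomial.coeff_coe,
        Polynomial.coeff_eq_zero_of_natDegree_lt (by omega), zero_mul]
    have h6 := Finset.sum_subset
      (Finset.range_subset_range.2 (show n + 1 ≤ (k + n).succ by omega)) h5
    calc ∑ s ∈ Finset.range (n + 1), Pp.coeff s * (PowerSeries.coeff (R := ℝ) (k + n - s)) g
        = ∑ s ∈ Finset.range (n + 1),
            (PowerSeries.coeff (R := ℝ) s) P * (PowerSeries.coeff (R := ℝ) (k + n - s)) g := by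
          refine Finset.sum_congr rfl fun s _ => ?_
          rw [hP, Polynomial.coeff_coe]
      _ = 0 := h6.trans h4

private lemma fin_sum_to_range {N : ℕ} (F : Fin N → ℝ) (f : ℕ → ℝ)
    (h : ∀ j : Fin N, F j = f (j : ℕ)) : ∑ j, F j = ∑ r ∈ Finset.range N, f r := by
  rw [← Fin.sum_univ_eq_sum_range]
  exact Finset.sum_congr rfl fun j _ => h j

theorem markov_generalized_eigenvalues {n : ℕ}
    (u : Fin (2 * n) → ℝ) (hu : StrictMono u) (hu0 : ∀ i, 0 ≤ u i)
    (x y : Fin n → ℝ)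
    (hx : ∀ j : Fin n, x j = u ⟨2 * (j : ℕ), by omega⟩)
    (hy : ∀ j : Fin n, y j = u ⟨2 * (j : ℕ) + 1, by omega⟩)
    (m : Fin (2 * n) → ℝ)
    (hm : ∀ k : Fin (2 * n),
      m k = (∑ j, x j ^ ((k : ℕ) + 1)) - ∑ j, y j ^ ((k : ℕ) + 1))
    (A : Matrix (Fin (2 * n)) (Fin (2 * n)) ℝ)
    (hA : ∀ i j : Fin (2 * n), A i j =
      if i = j then ((i : ℕ) + 1 : ℝ)
      else if h : (j : ℕ) < (i : ℕ) then
        -m ⟨(i : ℕ) - (j : ℕ) - 1, by omega⟩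
      else 0)
    (a : Fin (2 * n) → ℝ) (ha : A *ᵥ a = m)
    (A₁ A₂ : Matrix (Fin n) (Fin n) ℝ)
    (hA₁ : ∀ i j : Fin n, A₁ i j = a ⟨(i : ℕ) + (j : ℕ), by omega⟩)
    (hA₂ : ∀ i j : Fin n, A₂ i j = a ⟨(i : ℕ) + (j : ℕ) + 1, by omega⟩) :
    ∀ j : Fin n, ∃ v : Fin n → ℝ, v ≠ 0 ∧ A₂ *ᵥ v = x j • (A₁ *ᵥ v) := by
  intro j
  classical
  obtain ⟨gc, hgc0, hgrec, hgP⟩ := gseq n x y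
  have hm' : ∀ p : ℕ, ∀ hp : p < 2 * n,
      m ⟨p, hp⟩ = (∑ l, x l ^ (p + 1)) - ∑ l, y l ^ (p + 1) := fun p hp => hm ⟨p, hp⟩
  -- identify a with the power series coefficients
  have hag : ∀ t : ℕ, ∀ ht : t < 2 * n, a ⟨t, ht⟩ = gc (t + 1) := by
    intro t
    induction t using Nat.strong_induction_on with
    | _ t IH =>
      intro ht
      have hrow := congrFun ha ⟨t, ht⟩
      simp only [Matrix.mulVec, dotProduct] at hrow
      rw [fin_sum_to_range (fun j' => A ⟨t, ht⟩ j' * a j')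
        (fun r => if h : r < 2 * n then A ⟨t, ht⟩ ⟨r, h⟩ * a ⟨r, h⟩ else 0)
        (fun j' => by beta_reduce; rw [dif_pos j'.isLt])] at hrow
      rw [← Finset.sum_subset (Finset.range_subset_range.2 (show t + 1 ≤ 2 * n by omega))
        (by
          intro r hr1 hr2
          simp only [Finset.mem_range] at hr1 hr2
          rw [dif_pos hr1, hA,
            if_neg (show (⟨t, ht⟩ : Fin (2 * n)) ≠ ⟨r, hr1⟩ from by
              simp only [ne_eq, Fin.mk.injEq]; omega),
            dif_neg (show ¬ (r < t) from by omega), zero_mul])] at hrow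
      rw [Finset.sum_range_succ, dif_pos ht, hA, if_pos rfl, hm' t ht] at hrow
      simp only [Fin.val_mk] at hrow
      have hsum : ∑ r ∈ Finset.range t,
          (if h : r < 2 * n then A ⟨t, ht⟩ ⟨r, h⟩ * a ⟨r, h⟩ else 0)
          = -∑ r ∈ Finset.range t,
              ((∑ l, x l ^ (t - r - 1 + 1)) - ∑ l, y l ^ (t - r - 1 + 1)) * gc (r + 1) := by
        rw [← Finset.sum_neg_distrib]
        refine Finset.sum_congr rfl fun r hr => ?_
        simp only [Finset.mem_range] at hr
        have hr2n : r < 2 * n := by omega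
        rw [dif_pos hr2n, hA,
          if_neg (show (⟨t, ht⟩ : Fin (2 * n)) ≠ ⟨r, hr2n⟩ from by
            simp only [ne_eq, Fin.mk.injEq]; omega),
          dif_pos (show r < t from hr), IH r hr hr2n]
        rw [hm' (t - r - 1) (by omega)]
        ring
      have hg := hgrec t
      rw [Finset.sum_range_succ, Nat.sub_self, hgc0, mul_one,
        ← Finset.sum_range_reflect] at hg
      have hg2 : ∑ r ∈ Finset.range t,
          ((∑ l, x l ^ (t - 1 - r + 1)) - ∑ l, y l ^ (t - 1 - r + 1)) * gc (t - (t - 1 - r))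
          = ∑ r ∈ Finset.range t,
              ((∑ l, x l ^ (t - r - 1 + 1)) - ∑ l, y l ^ (t - r - 1 + 1)) * gc (r + 1) := by
        refine Finset.sum_congr rfl fun r hr => ?_
        simp only [Finset.mem_range] at hr
        rw [show t - (t - 1 - r) = r + 1 from by omega, show t - 1 - r = t - r - 1 from by omega]
      rw [hg2] at hg
      have hcomb : ((t : ℝ) + 1) * a ⟨t, ht⟩ = ((t : ℝ) + 1) * gc (t + 1) := by
        linear_combination hrow - hsum - hg
      exact mul_left_cancel₀ (by positivity) hcomb
  -- the characteristic polynomial machinery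
  have hn : 0 < n := j.pos
  set G : Polynomial ℝ := ∏ l ∈ Finset.univ.erase j, (1 - Polynomial.C (x l) * Polynomial.X)
    with hGdef
  have hfac : (∏ l, (1 - Polynomial.C (x l) * Polynomial.X))
      = (1 - Polynomial.C (x j) * Polynomial.X) * G :=
    (Finset.mul_prod_erase _ _ (Finset.mem_univ j)).symm
  have hGdeg : G.natDegree ≤ n - 1 := by
    refine le_trans (natDegree_prod_one_sub_le' _ _) ?_
    rw [Finset.card_erase_of_mem (Finset.mem_univ j), Finset.card_univ, Fintype.card_fin]
  have hG0 : G.coeff 0 = 1 := by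
    rw [Polynomial.coeff_zero_eq_eval_zero, hGdef, Polynomial.eval_prod]
    simp
  have hPc : ∀ s : ℕ, (∏ l, (1 - Polynomial.C (x l) * Polynomial.X)).coeff s
      = G.coeff s - x j * (Polynomial.X * G).coeff s := by
    intro s
    rw [hfac, show (1 - Polynomial.C (x j) * Polynomial.X) * G
      = G - Polynomial.C (x j) * (Polynomial.X * G) from by ring,
      Polynomial.coeff_sub, Polynomial.coeff_C_mul]
  have hkey : ∀ k : ℕ, 1 ≤ k →
      ∑ s ∈ Finset.range n, G.coeff s * gc (k + n - s)
        = x j * ∑ s ∈ Finset.range n, G.coeff s * gc (k + n - (s + 1)) := by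
    intro k hk
    have h1 : ∑ s ∈ Finset.range (n + 1),
        (G.coeff s * gc (k + n - s) - x j * ((Polynomial.X * G).coeff s * gc (k + n - s)))
        = 0 := by
      rw [← hgP k hk]
      refine Finset.sum_congr rfl fun s _ => ?_
      rw [hPc s]; ring
    rw [Finset.sum_sub_distrib, ← Finset.mul_sum] at h1
    have hT1 : ∑ s ∈ Finset.range (n + 1), G.coeff s * gc (k + n - s)
        = ∑ s ∈ Finset.range n, G.coeff s * gc (k + n - s) := by
      rw [Finset.sum_range_succ,
        Polynomial.coeff_eq_zero_of_natDegree_lt (by omega), zero_mul, add_zero]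
    have hT2 : ∑ s ∈ Finset.range (n + 1), (Polynomial.X * G).coeff s * gc (k + n - s)
        = ∑ s ∈ Finset.range n, G.coeff s * gc (k + n - (s + 1)) := by
      rw [Finset.sum_range_succ']
      simp [Polynomial.coeff_X_mul]
    rw [hT1, hT2] at h1
    linear_combination h1
  -- the eigenvector
  refine ⟨fun j' => G.coeff (n - 1 - (j' : ℕ)), ?_, ?_⟩
  · intro h0
    have h1 := congrFun h0 ⟨n - 1, by omega⟩
    simp only [Nat.sub_self, Pi.zero_apply] at h1
    rw [hG0] at h1
    exact one_ne_zero h1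
  · funext i
    simp only [Matrix.mulVec, dotProduct, Pi.smul_apply, smul_eq_mul]
    have hL : ∑ j' : Fin n, A₂ i j' * G.coeff (n - 1 - (j' : ℕ))
        = ∑ s ∈ Finset.range n, G.coeff s * gc ((i : ℕ) + 1 + n - s) := by
      rw [fin_sum_to_range (fun j' => A₂ i j' * G.coeff (n - 1 - (j' : ℕ)))
        (fun r => gc ((i : ℕ) + r + 1 + 1) * G.coeff (n - 1 - r))
        (fun j' => by
          beta_reduce
          rw [hA₂, hag ((i : ℕ) + (j' : ℕ) + 1) (by omega)]),
        ← Finset.sum_range_reflect]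
      refine Finset.sum_congr rfl fun s hs => ?_
      simp only [Finset.mem_range] at hs
      rw [show n - 1 - (n - 1 - s) = s from by omega,
        show (i : ℕ) + (n - 1 - s) + 1 + 1 = (i : ℕ) + 1 + n - s from by omega, mul_comm]
    have hR : ∑ j' : Fin n, A₁ i j' * G.coeff (n - 1 - (j' : ℕ))
        = ∑ s ∈ Finset.range n, G.coeff s * gc ((i : ℕ) + 1 + n - (s + 1)) := by
      rw [fin_sum_to_range (fun j' => A₁ i j' * G.coeff (n - 1 - (j' : ℕ)))
        (fun r => gc ((i : ℕ) + r + 1) * G.coeff (n - 1 - r))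
        (fun j' => by
          beta_reduce
          rw [hA₁, hag ((i : ℕ) + (j' : ℕ)) (by omega)]),
        ← Finset.sum_range_reflect]
      refine Finset.sum_congr rfl fun s hs => ?_
      simp only [Finset.mem_range] at hs
      rw [show n - 1 - (n - 1 - s) = s from by omega,
        show (i : ℕ) + (n - 1 - s) + 1 = (i : ℕ) + 1 + n - (s + 1) from by omega, mul_comm]
    rw [hL, hR]
    exact hkey ((i : ℕ) + 1) (by omega)
end

section
/- With the notation of the generalized eigenvalue theorem: for fixed j, let v(x) = p(x)/(x−x_j) = v_1 + v_2 x + ... + v_n x^{n−1}, where p(x) = Π_{i=1}^n (x−x_i) has coefficients c_0,...,c_n, and suppose Σ_{i=0}^n c_i a_{i+k} = 0 for k = 1,...,n. Then for each k = 1,...,n: Σ_{i=1}^n v_i a_{i+k} = x_j Σ_{i=1}^n v_i a_{i+k−1}, i.e., the coefficient vector v = (v_1,...,v_n)^T satisfies A_2 v = x_j A_1 v componentwise. -/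
open Matrix Finset

theorem eigen_componentwise {n : ℕ} (a : ℕ → ℝ) (ha0 : a 0 = 1)
    (cc v : ℕ → ℝ) (xj : ℝ)
    (hfac : ∀ t : ℝ, ∑ i ∈ Finset.range (n + 1), cc i * t ^ i =
      (t - xj) * ∑ i ∈ Finset.range n, v (i + 1) * t ^ i)
    (hker : ∀ k, 1 ≤ k → k ≤ n → ∑ i ∈ Finset.range (n + 1), cc i * a (i + k) = 0) :
    ∀ k, 1 ≤ k → k ≤ n →
      ∑ i ∈ Finset.range n, v (i + 1) * a (i + 1 + k) =
        xj * ∑ i ∈ Finset.range n, v (i + 1) * a (i + k) := by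
  classical
  set rc : ℕ → ℝ := fun m => if m < n then v (m + 1) else 0 with hrcdef
  set R : Polynomial ℝ := ∑ i ∈ Finset.range n, Polynomial.C (v (i + 1)) * Polynomial.X ^ i with hRdef
  have hpoly : (∑ i ∈ Finset.range (n + 1), Polynomial.C (cc i) * Polynomial.X ^ i)
      = (Polynomial.X - Polynomial.C xj) * R := by
    apply Polynomial.funext
    intro t
    simpa [hRdef, Polynomial.eval_finset_sum] using hfac t
  have hR : ∀ m, R.coeff m = rc m := by
    intro m
    rw [hRdef, Polynomial.finset_sum_coeff]
    simp only [Polynomial.coeff_C_mul, Polynomial.coeff_X_pow, mul_ite, mul_one, mul_zero]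
    rw [Finset.sum_ite_eq (Finset.range n) m (fun i => v (i + 1))]
    simp [hrcdef]
  have hcc : ∀ m, m ≤ n → cc m = (if 1 ≤ m then rc (m - 1) else 0) - xj * rc m := by
    intro m hm
    have h := congrArg (fun p => Polynomial.coeff p m) hpoly
    simp only [Polynomial.finset_sum_coeff, Polynomial.coeff_C_mul, Polynomial.coeff_X_pow,
      mul_ite, mul_one, mul_zero, sub_mul, Polynomial.coeff_sub, Polynomial.coeff_C_mul] at h
    rw [Finset.sum_ite_eq (Finset.range (n + 1)) m cc] at h
    rw [if_pos (Finset.mem_range.mpr (Nat.lt_succ_of_le hm))] at h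
    rw [h, hR]
    congr 1
    cases m with
    | zero => simp [Polynomial.mul_coeff_zero]
    | succ m => simp [Polynomial.coeff_X_mul, hR]
  -- main computation
  intro k hk1 hkn
  have h0 := hker k hk1 hkn
  have hsum : ∑ i ∈ Finset.range (n + 1), cc i * a (i + k)
      = (∑ i ∈ Finset.range n, v (i + 1) * a (i + 1 + k))
        - xj * ∑ i ∈ Finset.range n, v (i + 1) * a (i + k) := by
    have : ∀ i ∈ Finset.range (n + 1), cc i * a (i + k)
        = (if 1 ≤ i then rc (i - 1) else 0) * a (i + k) - xj * (rc i * a (i + k)) := by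
      intro i hi
      rw [hcc i (Nat.lt_succ_iff.mp (Finset.mem_range.mp hi))]
      ring
    rw [Finset.sum_congr rfl this, Finset.sum_sub_distrib, ← Finset.mul_sum]
    congr 1
    · rw [Finset.sum_range_succ']
      have h1 : ∀ i ∈ Finset.range n,
          (if 1 ≤ i + 1 then rc (i + 1 - 1) else 0) * a (i + 1 + k) = v (i + 1) * a (i + 1 + k) := by
        intro i hi
        simp [hrcdef, Finset.mem_range.mp hi]
      rw [Finset.sum_congr rfl h1]
      simp
    · rw [Finset.sum_range_succ]
      have h1 : ∀ i ∈ Finset.range n, rc i * a (i + k) = v (i + 1) * a (i + k) := by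
        intro i hi
        simp [hrcdef, Finset.mem_range.mp hi]
      rw [Finset.sum_congr rfl h1]
      simp [hrcdef]
  rw [hsum] at h0
  linarith
end

section
/- Let p(x) = Π_{i=1}^n (x−x_i) and q(x) = Π_{i=1}^n (x−y_i) with all x_i, y_i distinct, and let v(x) = p(x)/(x−x_j) for fixed j. Let ā = (1, a_1, ..., a_n)^T satisfy T(ā)c̄ = d̄ where c̄, d̄ are the reversed coefficient vectors of p and q. Then Σ_{i=1}^n v_i a_i = q(x_j), where v_1,...,v_n are the coefficients of v. In particular this sum is nonzero since x_j ≠ y_i for all i. -/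
open Matrix Finset

/-!
Read vectors as polynomials in `s`. Then `T(ā)` acts as multiplication by `A = Σ aₖ sᵏ` modulo
`s^(n+1)`, `c̄` and `d̄` are the reversals of `p` and `q`, and `p = (t - x_j) v` reverses to
`c̄ = (1 - x_j s) w̄` with `w̄` the reversal of `v`. The sum `Σ vᵢ aᵢ` is the coefficient of `sⁿ` in
`A w̄`; dividing `A c̄ ≡ d̄` by `1 - x_j s` modulo `s^(n+1)` gives this coefficient as
`Σₘ x_j^(n-m) d_(n-m) = q(x_j)`.
-/

open Polynomial

section Semiring

variable {R : Type*} [Semiring R]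

theorem coeff_sum_range_C_mul_X_pow (f : ℕ → R) (n k : ℕ) :
    (∑ i ∈ range n, C (f i) * X ^ i).coeff k = if k < n then f k else 0 := by
  simp [finsetSum_coeff]

theorem natDegree_sum_range_C_mul_X_pow_le (f : ℕ → R) (n : ℕ) :
    (∑ i ∈ range (n + 1), C (f i) * X ^ i).natDegree ≤ n :=
  natDegree_sum_le_of_forall_le _ _ fun _ hi =>
    (natDegree_C_mul_X_pow_le _ _).trans (mem_range_succ_iff.mp hi)

theorem ofFn_eq_reflect [DecidableEq R] {n : ℕ} (f : ℕ → R) (c : Fin (n + 1) → R)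
    (hc : ∀ i : Fin (n + 1), c i = f (n - i)) :
    ofFn (n + 1) c = reflect n (∑ i ∈ range (n + 1), C (f i) * X ^ i) := by
  ext k
  rw [coeff_reflect, coeff_sum_range_C_mul_X_pow]
  by_cases hk : k ≤ n
  · rw [ofFn_coeff_eq_val_of_lt _ (Nat.lt_succ_of_le hk), hc, revAt_le hk,
      if_pos (Nat.lt_succ_of_le (Nat.sub_le n k))]
  · rw [ofFn_coeff_eq_zero_of_ge _ (by omega), revAt_eq_self_of_lt (by omega), if_neg (by omega)]

theorem coeff_mul_reflect_succ (F : R[X]) {G : R[X]} {N : ℕ} (hG : G.natDegree ≤ N) :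
    (F * reflect N G).coeff (N + 1) = ∑ k ∈ range (N + 1), F.coeff (k + 1) * G.coeff k := by
  rw [coeff_mul, Nat.sum_antidiagonal_eq_sum_range_succ_mk, sum_range_succ']
  simp only [coeff_reflect]
  rw [Nat.sub_zero, revAt_eq_self_of_lt N.lt_succ_self,
    coeff_eq_zero_of_natDegree_lt (Nat.lt_succ_of_le hG), mul_zero, add_zero]
  refine sum_congr rfl fun k hk => ?_
  have hk : k ≤ N := mem_range_succ_iff.mp hk
  rw [Nat.add_sub_add_right, revAt_le (Nat.sub_le N k), Nat.sub_sub_self hk]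

end Semiring

section Ring

variable {R : Type*} [Ring R]

theorem reflect_X_sub_C_mul (x : R) {G : R[X]} {N : ℕ} (hG : G.natDegree ≤ N) :
    reflect (N + 1) ((X - C x) * G) = (1 - C x * X) * reflect N G := by
  rw [add_comm, reflect_mul _ _ (natDegree_X_sub_C_le x) hG]
  simp [reflect_sub, reflect_C]

end Ring

section CommRing

variable {R : Type*} [CommRing R]

theorem sum_pow_mul_coeff_one_sub_C_mul_X_mul (x : R) (G : R[X]) (n : ℕ) :
    ∑ m ∈ range (n + 1), x ^ (n - m) * ((1 - C x * X) * G).coeff m = G.coeff n := by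
  induction n with
  | zero => simp
  | succ n ih =>
    have hshift : ∑ m ∈ range (n + 1), x ^ (n + 1 - m) * ((1 - C x * X) * G).coeff m =
        x * G.coeff n := by
      rw [← ih, mul_sum]
      refine sum_congr rfl fun m hm => ?_
      rw [Nat.sub_add_comm (mem_range_succ_iff.mp hm), pow_succ]
      ring
    rw [sum_range_succ, hshift, Nat.sub_self, pow_zero, one_mul, sub_mul, one_mul, coeff_sub,
      mul_assoc, coeff_C_mul, coeff_X_mul]
    ring

end CommRing

theorem LTT_mulVec_apply_s18 {m : ℕ} (a c : Fin m → ℝ) (i : Fin m) :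
    (LTT a *ᵥ c) i = (ofFn m a * ofFn m c).coeff i := by
  rw [mul_comm, coeff_mul, Nat.sum_antidiagonal_eq_sum_range_succ_mk]
  have hterm : ∀ j : Fin m, LTT a i j * c j =
      if (j : ℕ) ≤ i then (ofFn m a).coeff (i - j) * (ofFn m c).coeff j else 0 := by
    intro j
    simp only [LTT, of_apply]
    split_ifs with h
    · rw [ofFn_coeff_eq_val_of_lt _ j.isLt, ofFn_coeff_eq_val_of_lt _ (by omega)]
    · rw [zero_mul]
  have hrange : (range m).filter (· ≤ (i : ℕ)) = range (i + 1) := by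
    ext k
    simp only [mem_filter, mem_range]
    omega
  simp only [mulVec, dotProduct, hterm]
  rw [Fin.sum_univ_eq_sum_range (fun j => if j ≤ i then
    (ofFn m a).coeff (i - j) * (ofFn m c).coeff j else 0), ← sum_filter, hrange]
  exact sum_congr rfl fun _ _ => mul_comm _ _

theorem eigenvector_sum_eq_q_general {n : ℕ} (x y : Fin n → ℝ)
    (hdist : Function.Injective (Sum.elim x y))
    (cc dd : ℕ → ℝ)
    (hq : ∀ t : ℝ, ∏ i, (t - y i) = ∑ i ∈ Finset.range (n + 1), dd i * t ^ i)
    (j : Fin n) (v : ℕ → ℝ)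
    (hfac : ∀ t : ℝ, ∑ i ∈ Finset.range (n + 1), cc i * t ^ i =
      (t - x j) * ∑ i ∈ Finset.range n, v (i + 1) * t ^ i)
    (abar : Fin (n + 1) → ℝ)
    (cbar dbar : Fin (n + 1) → ℝ)
    (hcbar : ∀ i : Fin (n + 1), cbar i = cc (n - (i : ℕ)))
    (hdbar : ∀ i : Fin (n + 1), dbar i = dd (n - (i : ℕ)))
    (hTa : LTT abar *ᵥ cbar = dbar) :
    (∑ i : Fin n, v ((i : ℕ) + 1) * abar i.succ) = ∏ i, (x j - y i) ∧
    (∑ i : Fin n, v ((i : ℕ) + 1) * abar i.succ) ≠ 0 := by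
  obtain ⟨N, rfl⟩ : ∃ N, n = N + 1 := ⟨n - 1, by have := j.pos; omega⟩
  set V : ℝ[X] := ∑ i ∈ range (N + 1), C (v (i + 1)) * X ^ i
  have hV : V.natDegree ≤ N := natDegree_sum_range_C_mul_X_pow_le _ N
  have hpV : ∑ i ∈ range (N + 1 + 1), C (cc i) * X ^ i = (X - C (x j)) * V :=
    Polynomial.funext fun t => by simpa [V, eval_finsetSum] using hfac t
  have hrev : ofFn (N + 1 + 1) cbar = (1 - C (x j) * X) * reflect N V := by
    rw [ofFn_eq_reflect cc cbar hcbar, hpV, reflect_X_sub_C_mul _ hV]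
  have hconv : ∀ m ≤ N + 1, (ofFn _ abar * ofFn _ cbar).coeff m = dd (N + 1 - m) := fun m hm => by
    simpa [hdbar] using (LTT_mulVec_apply_s18 abar cbar ⟨m, by omega⟩).symm.trans (congrFun hTa _)
  have hsum : ∑ i : Fin (N + 1), v ((i : ℕ) + 1) * abar i.succ = ∏ i, (x j - y i) := calc
    _ = (ofFn _ abar * reflect N V).coeff (N + 1) := by
      rw [coeff_mul_reflect_succ _ hV, ← Fin.sum_univ_eq_sum_range]
      refine sum_congr rfl fun i _ => ?_
      rw [coeff_sum_range_C_mul_X_pow, if_pos i.isLt, ofFn_coeff_eq_val_of_lt _ (by omega),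
        mul_comm]
      rfl
    _ = ∑ m ∈ range (N + 1 + 1), x j ^ (N + 1 - m) * dd (N + 1 - m) := by
      rw [← sum_pow_mul_coeff_one_sub_C_mul_X_mul (x j)]
      refine sum_congr rfl fun m hm => ?_
      rw [mul_left_comm, ← hrev, hconv m (mem_range_succ_iff.mp hm)]
    _ = ∏ i, (x j - y i) := by
      rw [hq, ← sum_range_reflect (fun i => dd i * x j ^ i)]
      exact sum_congr rfl fun m _ => by rw [Nat.add_sub_cancel, mul_comm]
  refine ⟨hsum, hsum ▸ prod_ne_zero_iff.2 fun i _ => sub_ne_zero.2 fun h => ?_⟩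
  exact Sum.inl_ne_inr (hdist h)

theorem eigenvector_sum_eq_q {n : ℕ} (x y : Fin n → ℝ)
    (hdist : Function.Injective (Sum.elim x y))
    (cc dd : ℕ → ℝ)
    (hp : ∀ t : ℝ, ∏ i, (t - x i) = ∑ i ∈ Finset.range (n + 1), cc i * t ^ i)
    (hq : ∀ t : ℝ, ∏ i, (t - y i) = ∑ i ∈ Finset.range (n + 1), dd i * t ^ i)
    (j : Fin n) (v : ℕ → ℝ)
    (hfac : ∀ t : ℝ, ∑ i ∈ Finset.range (n + 1), cc i * t ^ i =
      (t - x j) * ∑ i ∈ Finset.range n, v (i + 1) * t ^ i)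
    (abar : Fin (n + 1) → ℝ) (habar0 : abar 0 = 1)
    (cbar dbar : Fin (n + 1) → ℝ)
    (hcbar : ∀ i : Fin (n + 1), cbar i = cc (n - (i : ℕ)))
    (hdbar : ∀ i : Fin (n + 1), dbar i = dd (n - (i : ℕ)))
    (hTa : LTT abar *ᵥ cbar = dbar) :
    (∑ i : Fin n, v ((i : ℕ) + 1) * abar i.succ) = ∏ i, (x j - y i) ∧
    (∑ i : Fin n, v ((i : ℕ) + 1) * abar i.succ) ≠ 0 :=
  eigenvector_sum_eq_q_general x y hdist cc dd hq j v hfac abar cbar dbar hcbar hdbar hTa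
end
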